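/- Let n ≥ 4, let C be a trace-free Weyl candidate on ℝⁿ, let ℓ, m be null vectors with ℓᵀηm = 1, and set u = (ℓ − m)/√2 (a unit timelike vector). Then: (1) θ_u·C = C (C is purely electric with respect to u) if and only if for all vectors x, y, z, w that are η-orthogonal to both ℓ and m one has C(ℓ,x,ℓ,y) = C(m,x,m,y), C(ℓ,x,y,z) = C(m,x,y,z), and C(ℓ,m,x,y) = 0; (2) θ_u·C = −C (C is purely magnetic with respect to u) if and only if for all such x, y, z, w one has C(ℓ,x,ℓ,y) = −C(m,x,m,y), C(ℓ,x,y,z) = −C(m,x,y,z), and C(x,y,z,w) = 0. -/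

import Mathlib

open Matrix

noncomputable section

/-- The Minkowski metric `η = diag(-1, 1, …, 1)` on `ℝⁿ`. -/
def eta (n : ℕ) : Matrix (Fin n) (Fin n) ℝ :=
  Matrix.diagonal fun i => if i.val = 0 then (-1 : ℝ) else 1

/-- A null vector: nonzero with `vᵀηv = 0`. -/
def IsNull {n : ℕ} (v : Fin n → ℝ) : Prop :=
  v ≠ 0 ∧ v ⬝ᵥ (eta n).mulVec v = 0

/-- The reflection `θ_u = I + 2u(ηu)ᵀ` sending `u ↦ -u` and fixing `u^⊥`. -/
def theta {n : ℕ} (u : Fin n → ℝ) : Matrix (Fin n) (Fin n) ℝ :=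
  1 + (2 : ℝ) • vecMulVec u ((eta n).mulVec u)

/-- The pullback action of a matrix `Λ` on rank-4 covariant tensors. -/
def pull {n : ℕ} (Λ : Matrix (Fin n) (Fin n) ℝ)
    (C : Fin n → Fin n → Fin n → Fin n → ℝ) : Fin n → Fin n → Fin n → Fin n → ℝ :=
  fun a b c d => ∑ a', ∑ b', ∑ c', ∑ d',
    C a' b' c' d' * Λ a' a * Λ b' b * Λ c' c * Λ d' d

/-- Evaluation of a rank-4 covariant tensor on four vectors. -/
def ap {n : ℕ} (C : Fin n → Fin n → Fin n → Fin n → ℝ)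
    (v₁ v₂ v₃ v₄ : Fin n → ℝ) : ℝ :=
  ∑ a, ∑ b, ∑ c, ∑ d, C a b c d * v₁ a * v₂ b * v₃ c * v₄ d

/-!
The reflection `θ_u` fixes `u^⊥` and reverses `u`. Writing each argument as `c • u + p` with
`p ⊥ u`, the terms of `C(v₁, v₂, v₃, v₄)` with an odd number of `u`'s are, up to sign, values of
the magnetic part `C(u, a, b, c)`, and those with an even number are values of `C(a, b, c, d)` and
of the electric part `C(u, a, u, b)` (`a, b, c, d ⊥ u`). Hence `θ_u·C = C` as soon as the magnetic
part vanishes, and `θ_u·C = -C` as soon as the other two vanish.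

In the null frame `θ_u` swaps `ℓ` and `m` and fixes their common orthocomplement `X`; this gives the
frame conditions directly from `θ_u·C = ±C`. Conversely, a vector of `u^⊥` is `c (ℓ + m) + x` with
`x ∈ X`, so the relevant parts of `C` reduce to finitely many frame components. Those that are not
among the hypotheses follow from the first Bianchi identity and from trace-freeness, the trace
being taken in the null frame.
-/

open Finset

local notation "⟪" v ", " w "⟫ₘ" => v ⬝ᵥ eta _ *ᵥ w

lemma sum_rotate₃ {n : ℕ} (F : Fin n → Fin n → Fin n → ℝ) :
    ∑ a, ∑ b, ∑ c, F a b c = ∑ b, ∑ c, ∑ a, F a b c := by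
  rw [sum_comm]
  exact sum_congr rfl fun _ _ => sum_comm

lemma LinearMap.apply_eq_sum_single {n : ℕ} (φ : (Fin n → ℝ) →ₗ[ℝ] ℝ) (x : Fin n → ℝ) :
    φ x = ∑ a, x a * φ (Pi.single a 1) := by
  conv_lhs => rw [pi_eq_sum_univ' x]
  simp [map_sum]

section Tensor

variable {n : ℕ} (C : Fin n → Fin n → Fin n → Fin n → ℝ) (v₁ v₂ v₃ v₄ x y : Fin n → ℝ)

@[simp] lemma ap_add₁ : ap C (x + y) v₂ v₃ v₄ = ap C x v₂ v₃ v₄ + ap C y v₂ v₃ v₄ := by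
  simp only [ap, Pi.add_apply, mul_add, add_mul, sum_add_distrib]
@[simp] lemma ap_add₂ : ap C v₁ (x + y) v₃ v₄ = ap C v₁ x v₃ v₄ + ap C v₁ y v₃ v₄ := by
  simp only [ap, Pi.add_apply, mul_add, add_mul, sum_add_distrib]
@[simp] lemma ap_add₃ : ap C v₁ v₂ (x + y) v₄ = ap C v₁ v₂ x v₄ + ap C v₁ v₂ y v₄ := by
  simp only [ap, Pi.add_apply, mul_add, add_mul, sum_add_distrib]
@[simp] lemma ap_add₄ : ap C v₁ v₂ v₃ (x + y) = ap C v₁ v₂ v₃ x + ap C v₁ v₂ v₃ y := by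
  simp only [ap, Pi.add_apply, mul_add, sum_add_distrib]

@[simp] lemma ap_sub₁ : ap C (x - y) v₂ v₃ v₄ = ap C x v₂ v₃ v₄ - ap C y v₂ v₃ v₄ := by
  simp only [ap, Pi.sub_apply, mul_sub, sub_mul, sum_sub_distrib]
@[simp] lemma ap_sub₂ : ap C v₁ (x - y) v₃ v₄ = ap C v₁ x v₃ v₄ - ap C v₁ y v₃ v₄ := by
  simp only [ap, Pi.sub_apply, mul_sub, sub_mul, sum_sub_distrib]
@[simp] lemma ap_sub₃ : ap C v₁ v₂ (x - y) v₄ = ap C v₁ v₂ x v₄ - ap C v₁ v₂ y v₄ := by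
  simp only [ap, Pi.sub_apply, mul_sub, sub_mul, sum_sub_distrib]
@[simp] lemma ap_sub₄ : ap C v₁ v₂ v₃ (x - y) = ap C v₁ v₂ v₃ x - ap C v₁ v₂ v₃ y := by
  simp only [ap, Pi.sub_apply, mul_sub, sum_sub_distrib]

@[simp] lemma ap_smul₁ (c : ℝ) : ap C (c • x) v₂ v₃ v₄ = c * ap C x v₂ v₃ v₄ := by
  simp only [ap, Pi.smul_apply, smul_eq_mul, mul_sum, mul_assoc, mul_left_comm _ c]
@[simp] lemma ap_smul₂ (c : ℝ) : ap C v₁ (c • x) v₃ v₄ = c * ap C v₁ x v₃ v₄ := by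
  simp only [ap, Pi.smul_apply, smul_eq_mul, mul_sum, mul_assoc, mul_left_comm _ c]
@[simp] lemma ap_smul₃ (c : ℝ) : ap C v₁ v₂ (c • x) v₄ = c * ap C v₁ v₂ x v₄ := by
  simp only [ap, Pi.smul_apply, smul_eq_mul, mul_sum, mul_assoc, mul_left_comm _ c]
@[simp] lemma ap_smul₄ (c : ℝ) : ap C v₁ v₂ v₃ (c • x) = c * ap C v₁ v₂ v₃ x := by
  simp only [ap, Pi.smul_apply, smul_eq_mul, mul_sum, mul_assoc, mul_left_comm _ c]

lemma ap_sum₁ {ι : Type*} (s : Finset ι) (f : ι → Fin n → ℝ) :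
    ap C (∑ i ∈ s, f i) v₂ v₃ v₄ = ∑ i ∈ s, ap C (f i) v₂ v₃ v₄ :=
  map_sum (AddMonoidHom.mk' (ap C · v₂ v₃ v₄) (ap_add₁ C v₂ v₃ v₄)) f s
lemma ap_sum₂ {ι : Type*} (s : Finset ι) (f : ι → Fin n → ℝ) :
    ap C v₁ (∑ i ∈ s, f i) v₃ v₄ = ∑ i ∈ s, ap C v₁ (f i) v₃ v₄ :=
  map_sum (AddMonoidHom.mk' (ap C v₁ · v₃ v₄) (ap_add₂ C v₁ v₃ v₄)) f s
lemma ap_sum₃ {ι : Type*} (s : Finset ι) (f : ι → Fin n → ℝ) :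
    ap C v₁ v₂ (∑ i ∈ s, f i) v₄ = ∑ i ∈ s, ap C v₁ v₂ (f i) v₄ :=
  map_sum (AddMonoidHom.mk' (ap C v₁ v₂ · v₄) (ap_add₃ C v₁ v₂ v₄)) f s
lemma ap_sum₄ {ι : Type*} (s : Finset ι) (f : ι → Fin n → ℝ) :
    ap C v₁ v₂ v₃ (∑ i ∈ s, f i) = ∑ i ∈ s, ap C v₁ v₂ v₃ (f i) :=
  map_sum (AddMonoidHom.mk' (ap C v₁ v₂ v₃ ·) (ap_add₄ C v₁ v₂ v₃)) f s

lemma ap_neg_tensor : ap (fun a b c d => -C a b c d) v₁ v₂ v₃ v₄ = -ap C v₁ v₂ v₃ v₄ := by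
  simp [ap]

lemma ap_single (a b c d : Fin n) :
    ap C (Pi.single a 1) (Pi.single b 1) (Pi.single c 1) (Pi.single d 1) = C a b c d := by
  simp [ap, Pi.single_apply]

lemma pull_apply (Λ : Matrix (Fin n) (Fin n) ℝ) (a b c d : Fin n) :
    pull Λ C a b c d = ap C (Λ *ᵥ Pi.single a 1) (Λ *ᵥ Pi.single b 1) (Λ *ᵥ Pi.single c 1)
      (Λ *ᵥ Pi.single d 1) := by
  simp [pull, ap]

lemma ap_pull (Λ : Matrix (Fin n) (Fin n) ℝ) :
    ap (pull Λ C) v₁ v₂ v₃ v₄ = ap C (Λ *ᵥ v₁) (Λ *ᵥ v₂) (Λ *ᵥ v₃) (Λ *ᵥ v₄) := by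
  conv_rhs => rw [pi_eq_sum_univ' v₁, pi_eq_sum_univ' v₂, pi_eq_sum_univ' v₃, pi_eq_sum_univ' v₄]
  conv_lhs => unfold ap
  simp only [Matrix.mulVec_sum, Matrix.mulVec_smul, ap_sum₁]
  simp only [ap_sum₂]
  simp only [ap_sum₃]
  simp only [ap_sum₄, ap_smul₁, ap_smul₂, ap_smul₃, ap_smul₄, ← pull_apply]
  refine sum_congr rfl fun _ _ => sum_congr rfl fun _ _ => sum_congr rfl fun _ _ =>
    sum_congr rfl fun _ _ => by ring

lemma ap_bianchi (h : ∀ a b c d, C a b c d + C a c d b + C a d b c = 0) :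
    ap C v₁ v₂ v₃ v₄ + ap C v₁ v₃ v₄ v₂ + ap C v₁ v₄ v₂ v₃ = 0 := by
  have e₂ : ap C v₁ v₃ v₄ v₂ = ∑ a, ∑ b, ∑ c, ∑ d, C a c d b * v₁ a * v₂ b * v₃ c * v₄ d := by
    refine sum_congr rfl fun a _ => ?_
    rw [sum_rotate₃, sum_rotate₃]
    refine sum_congr rfl fun _ _ => sum_congr rfl fun _ _ => sum_congr rfl fun _ _ => by ring
  have e₃ : ap C v₁ v₄ v₂ v₃ = ∑ a, ∑ b, ∑ c, ∑ d, C a d b c * v₁ a * v₂ b * v₃ c * v₄ d := by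
    refine sum_congr rfl fun a _ => ?_
    rw [sum_rotate₃]
    refine sum_congr rfl fun _ _ => sum_congr rfl fun _ _ => sum_congr rfl fun _ _ => by ring
  rw [e₂, e₃, ap]
  simp only [← sum_add_distrib]
  refine sum_eq_zero fun a _ => sum_eq_zero fun b _ => sum_eq_zero fun c _ =>
    sum_eq_zero fun d _ => ?_
  linear_combination v₁ a * v₂ b * v₃ c * v₄ d * h a b c d

end Tensor

lemma tensor_ext_ap {n : ℕ} {T T' : Fin n → Fin n → Fin n → Fin n → ℝ}
    (h : ∀ v₁ v₂ v₃ v₄, ap T v₁ v₂ v₃ v₄ = ap T' v₁ v₂ v₃ v₄) : T = T' := by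
  funext a b c d
  simpa only [ap_single] using h (Pi.single a 1) (Pi.single b 1) (Pi.single c 1) (Pi.single d 1)

section Minkowski

variable {n : ℕ}

lemma mink_comm (v w : Fin n → ℝ) : ⟪v, w⟫ₘ = ⟪w, v⟫ₘ := by
  rw [dotProduct_mulVec, ← mulVec_transpose, eta, diagonal_transpose, dotProduct_comm]

lemma mink_single (v : Fin n → ℝ) (a : Fin n) : ⟪v, Pi.single a 1⟫ₘ = eta n a a * v a := by
  simp [eta, mul_comm]

lemma eta_mul_self (a : Fin n) : eta n a a * eta n a a = 1 := by
  by_cases h : a.val = 0 <;> simp [eta, h]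

lemma theta_mulVec (u v : Fin n → ℝ) : theta u *ᵥ v = v + (2 * ⟪u, v⟫ₘ) • u := by
  rw [theta, add_mulVec, one_mulVec, smul_mulVec, vecMulVec_mulVec, op_smul_eq_smul, smul_smul,
    dotProduct_comm, mink_comm]

lemma exists_smul_add_orthogonal {u : Fin n → ℝ} (hu : ⟪u, u⟫ₘ = -1) (v : Fin n → ℝ) :
    ∃ (c : ℝ) (p : Fin n → ℝ), ⟪u, p⟫ₘ = 0 ∧ v = c • u + p ∧ theta u *ᵥ v = (-c) • u + p := by
  refine ⟨-⟪u, v⟫ₘ, v + ⟪u, v⟫ₘ • u, ?_, by module, by rw [theta_mulVec]; module⟩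
  simp [mulVec_add, dotProduct_add, mulVec_smul, dotProduct_smul, hu]

end Minkowski

structure RiemannSymmetric {n : ℕ} (C : Fin n → Fin n → Fin n → Fin n → ℝ) : Prop where
  anti_left : ∀ a b c d, C b a c d = -C a b c d
  anti_right : ∀ a b c d, C a b d c = -C a b c d
  swap_pairs : ∀ a b c d, C c d a b = C a b c d

namespace RiemannSymmetric

variable {n : ℕ} {C : Fin n → Fin n → Fin n → Fin n → ℝ} (v₁ v₂ v₃ v₄ : Fin n → ℝ)

lemma ap_swap₁₂ (hC : RiemannSymmetric C) : ap C v₂ v₁ v₃ v₄ = -ap C v₁ v₂ v₃ v₄ := by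
  simp only [ap, ← sum_neg_distrib]
  rw [sum_comm]
  refine sum_congr rfl fun a _ => sum_congr rfl fun b _ => sum_congr rfl fun c _ =>
    sum_congr rfl fun d _ => ?_
  rw [hC.anti_left]; ring

lemma ap_swap₃₄ (hC : RiemannSymmetric C) : ap C v₁ v₂ v₄ v₃ = -ap C v₁ v₂ v₃ v₄ := by
  simp only [ap, ← sum_neg_distrib]
  refine sum_congr rfl fun a _ => sum_congr rfl fun b _ => ?_
  rw [sum_comm]
  refine sum_congr rfl fun c _ => sum_congr rfl fun d _ => ?_
  rw [hC.anti_right]; ring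

lemma ap_swap_pairs (hC : RiemannSymmetric C) : ap C v₃ v₄ v₁ v₂ = ap C v₁ v₂ v₃ v₄ := by
  unfold ap
  rw [sum_congr rfl fun a _ => sum_rotate₃ _, sum_rotate₃]
  refine sum_congr rfl fun c _ => sum_congr rfl fun d _ => sum_congr rfl fun a _ =>
    sum_congr rfl fun b _ => ?_
  rw [← hC.swap_pairs]; ring

lemma ap_swap_both (hC : RiemannSymmetric C) : ap C v₂ v₁ v₄ v₃ = ap C v₁ v₂ v₃ v₄ := by
  rw [hC.ap_swap₁₂, hC.ap_swap₃₄, neg_neg]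

lemma ap_self₁₂ (hC : RiemannSymmetric C) (v w z : Fin n → ℝ) : ap C v v w z = 0 := by
  linarith [hC.ap_swap₁₂ v v w z]

lemma ap_self₃₄ (hC : RiemannSymmetric C) (v w z : Fin n → ℝ) : ap C v w z z = 0 := by
  linarith [hC.ap_swap₃₄ v w z z]

/-- The terms with `s` twice in one antisymmetric pair vanish, and the pair symmetries move the
remaining `s` to the front. -/
lemma ap_smul_add (hC : RiemannSymmetric C) (s p₁ p₂ p₃ p₄ : Fin n → ℝ) (c₁ c₂ c₃ c₄ : ℝ) :
    ap C (c₁ • s + p₁) (c₂ • s + p₂) (c₃ • s + p₃) (c₄ • s + p₄) =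
      ap C p₁ p₂ p₃ p₄
      + (c₁ * ap C s p₂ p₃ p₄ - c₂ * ap C s p₁ p₃ p₄ + c₃ * ap C s p₄ p₁ p₂
        - c₄ * ap C s p₃ p₁ p₂)
      + (c₁ * c₃ * ap C s p₂ s p₄ - c₁ * c₄ * ap C s p₂ s p₃ - c₂ * c₃ * ap C s p₁ s p₄
        + c₂ * c₄ * ap C s p₁ s p₃) := by
  simp only [ap_add₁, ap_add₂, ap_add₃, ap_add₄, ap_smul₁, ap_smul₂, ap_smul₃, ap_smul₄,
    hC.ap_self₁₂, hC.ap_self₃₄]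
  rw [hC.ap_swap₁₂ s p₁ p₃ p₄, hC.ap_swap_pairs s p₄ p₁ p₂, hC.ap_swap₃₄ p₁ p₂ s p₃,
    hC.ap_swap_pairs s p₃ p₁ p₂, hC.ap_swap₃₄ s p₂ s p₃, hC.ap_swap₁₂ s p₁ s p₄,
    hC.ap_swap₁₂ s p₁ p₃ s, hC.ap_swap₃₄ s p₁ s p₃]
  ring

lemma pull_theta_eq_self {u : Fin n → ℝ} (hC : RiemannSymmetric C) (hu : ⟪u, u⟫ₘ = -1)
    (hH : ∀ a b c, ⟪u, a⟫ₘ = 0 → ⟪u, b⟫ₘ = 0 → ⟪u, c⟫ₘ = 0 → ap C u a b c = 0) :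
    pull (theta u) C = C := by
  refine tensor_ext_ap fun v₁ v₂ v₃ v₄ => ?_
  obtain ⟨c₁, p₁, hp₁, rfl, hθ₁⟩ := exists_smul_add_orthogonal hu v₁
  obtain ⟨c₂, p₂, hp₂, rfl, hθ₂⟩ := exists_smul_add_orthogonal hu v₂
  obtain ⟨c₃, p₃, hp₃, rfl, hθ₃⟩ := exists_smul_add_orthogonal hu v₃
  obtain ⟨c₄, p₄, hp₄, rfl, hθ₄⟩ := exists_smul_add_orthogonal hu v₄
  rw [ap_pull, hθ₁, hθ₂, hθ₃, hθ₄, hC.ap_smul_add, hC.ap_smul_add, hH _ _ _ hp₂ hp₃ hp₄,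
    hH _ _ _ hp₁ hp₃ hp₄, hH _ _ _ hp₄ hp₁ hp₂, hH _ _ _ hp₃ hp₁ hp₂]
  ring

lemma pull_theta_eq_neg {u : Fin n → ℝ} (hC : RiemannSymmetric C) (hu : ⟪u, u⟫ₘ = -1)
    (hR : ∀ a b c d, ⟪u, a⟫ₘ = 0 → ⟪u, b⟫ₘ = 0 → ⟪u, c⟫ₘ = 0 → ⟪u, d⟫ₘ = 0 →
      ap C a b c d = 0)
    (hE : ∀ a b, ⟪u, a⟫ₘ = 0 → ⟪u, b⟫ₘ = 0 → ap C u a u b = 0) :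
    pull (theta u) C = fun a b c d => -C a b c d := by
  refine tensor_ext_ap fun v₁ v₂ v₃ v₄ => ?_
  obtain ⟨c₁, p₁, hp₁, rfl, hθ₁⟩ := exists_smul_add_orthogonal hu v₁
  obtain ⟨c₂, p₂, hp₂, rfl, hθ₂⟩ := exists_smul_add_orthogonal hu v₂
  obtain ⟨c₃, p₃, hp₃, rfl, hθ₃⟩ := exists_smul_add_orthogonal hu v₃
  obtain ⟨c₄, p₄, hp₄, rfl, hθ₄⟩ := exists_smul_add_orthogonal hu v₄
  rw [ap_pull, ap_neg_tensor, hθ₁, hθ₂, hθ₃, hθ₄, hC.ap_smul_add, hC.ap_smul_add,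
    hR _ _ _ _ hp₁ hp₂ hp₃ hp₄, hE _ _ hp₂ hp₄, hE _ _ hp₂ hp₃, hE _ _ hp₁ hp₄, hE _ _ hp₁ hp₃]
  ring

end RiemannSymmetric

section NullFrame

variable {n : ℕ} {l m : Fin n → ℝ}

def IsTransverse (l m x : Fin n → ℝ) : Prop := ⟪l, x⟫ₘ = 0 ∧ ⟪m, x⟫ₘ = 0

def transverseProj (l m : Fin n → ℝ) : (Fin n → ℝ) →ₗ[ℝ] (Fin n → ℝ) where
  toFun x := x - ⟪m, x⟫ₘ • l - ⟪l, x⟫ₘ • m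
  map_add' x y := by simp only [mulVec_add, dotProduct_add, add_smul]; abel
  map_smul' c x := by simp only [mulVec_smul, dotProduct_smul, smul_eq_mul, mul_smul, smul_sub]; rfl

lemma transverseProj_apply (x : Fin n → ℝ) :
    transverseProj l m x = x - ⟪m, x⟫ₘ • l - ⟪l, x⟫ₘ • m := rfl

lemma isTransverse_transverseProj (hll : ⟪l, l⟫ₘ = 0) (hmm : ⟪m, m⟫ₘ = 0) (hlm : ⟪l, m⟫ₘ = 1)
    (x : Fin n → ℝ) : IsTransverse l m (transverseProj l m x) := by
  have hml : ⟪m, l⟫ₘ = 1 := by rw [mink_comm, hlm]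
  constructor <;>
    simp [transverseProj_apply, mulVec_sub, mulVec_smul, dotProduct_sub, hll, hmm, hlm, hml]

lemma exists_smul_add_isTransverse (hll : ⟪l, l⟫ₘ = 0) (hmm : ⟪m, m⟫ₘ = 0)
    (hlm : ⟪l, m⟫ₘ = 1) {a : Fin n → ℝ} (ha : ⟪l - m, a⟫ₘ = 0) :
    ∃ (c : ℝ) (x : Fin n → ℝ), IsTransverse l m x ∧ a = c • (l + m) + x := by
  have hml : ⟪m, l⟫ₘ = 1 := by rw [mink_comm, hlm]
  rw [sub_dotProduct, sub_eq_zero] at ha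
  refine ⟨⟪l, a⟫ₘ, a - ⟪l, a⟫ₘ • (l + m), ⟨?_, ?_⟩, by abel⟩ <;>
    simp [mulVec_sub, mulVec_smul, mulVec_add, dotProduct_sub, dotProduct_add, hll, hmm, hlm,
      hml, ha]

lemma sum_eta_mul_bilin_nullPart (B : LinearMap.BilinForm ℝ (Fin n → ℝ))
    (F : (Fin n → ℝ) →ₗ[ℝ] (Fin n → ℝ)) :
    ∑ a, eta n a a * B (⟪m, Pi.single a 1⟫ₘ • l + ⟪l, Pi.single a 1⟫ₘ • m) (F (Pi.single a 1)) =
      B l (F m) + B m (F l) := by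
  rw [show B l (F m) = (B l ∘ₗ F) m from rfl, show B m (F l) = (B m ∘ₗ F) l from rfl,
    LinearMap.apply_eq_sum_single (B l ∘ₗ F) m, LinearMap.apply_eq_sum_single (B m ∘ₗ F) l,
    ← sum_add_distrib]
  refine sum_congr rfl fun a _ => ?_
  simp only [mink_single, map_add, map_smul, LinearMap.add_apply, LinearMap.smul_apply,
    LinearMap.comp_apply, smul_eq_mul]
  linear_combination (m a * B l (F (Pi.single a 1)) + l a * B m (F (Pi.single a 1))) *
    eta_mul_self a

/-- In the null frame the inverse metric is `ℓ mᵀ + m ℓᵀ + ∑ₐ ηₐₐ (P eₐ)(P eₐ)ᵀ`, with `P` the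
projection onto `{ℓ, m}^⊥`. -/
lemma sum_eta_mul_bilin_single (hll : ⟪l, l⟫ₘ = 0) (hmm : ⟪m, m⟫ₘ = 0) (hlm : ⟪l, m⟫ₘ = 1)
    (B : LinearMap.BilinForm ℝ (Fin n → ℝ)) :
    ∑ a, eta n a a * B (Pi.single a 1) (Pi.single a 1) =
      B l m + B m l + ∑ a, eta n a a * B (transverseProj l m (Pi.single a 1))
        (transverseProj l m (Pi.single a 1)) := by
  have hml : ⟪m, l⟫ₘ = 1 := by rw [mink_comm, hlm]
  have hPl : transverseProj l m l = 0 := by simp [transverseProj_apply, hll, hml]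
  have hPm : transverseProj l m m = 0 := by simp [transverseProj_apply, hmm, hlm]
  have hQ := sum_eta_mul_bilin_nullPart (l := l) (m := m) B LinearMap.id
  have hQ' := sum_eta_mul_bilin_nullPart (l := l) (m := m) B.flip (transverseProj l m)
  simp only [LinearMap.id_apply, hPl, hPm, map_zero, add_zero] at hQ hQ'
  have split : ∀ a : Fin n, B (Pi.single a 1) (Pi.single a 1) =
      B (⟪m, Pi.single a 1⟫ₘ • l + ⟪l, Pi.single a 1⟫ₘ • m) (Pi.single a 1)
      + B.flip (⟪m, Pi.single a 1⟫ₘ • l + ⟪l, Pi.single a 1⟫ₘ • m)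
          (transverseProj l m (Pi.single a 1))
      + B (transverseProj l m (Pi.single a 1)) (transverseProj l m (Pi.single a 1)) := by
    intro a
    have he : ⟪m, Pi.single a 1⟫ₘ • l + ⟪l, Pi.single a 1⟫ₘ • m
        + transverseProj l m (Pi.single a 1) = Pi.single a 1 := by
      rw [transverseProj_apply]; abel
    have key : ∀ q p : Fin n → ℝ, B (q + p) (q + p) = B q (q + p) + B.flip q p + B p p := by
      intro q p; simp only [map_add, LinearMap.add_apply, LinearMap.BilinForm.flip_apply]; ring
    simpa only [he] using key (⟪m, Pi.single a 1⟫ₘ • l + ⟪l, Pi.single a 1⟫ₘ • m)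
      (transverseProj l m (Pi.single a 1))
  simp only [split, mul_add, sum_add_distrib, hQ, hQ', add_zero]

variable {C : Fin n → Fin n → Fin n → Fin n → ℝ} {u : Fin n → ℝ}

def transverseTrace (C : Fin n → Fin n → Fin n → Fin n → ℝ) (l m v w : Fin n → ℝ) : ℝ :=
  ∑ a, eta n a a *
    ap C (transverseProj l m (Pi.single a 1)) v (transverseProj l m (Pi.single a 1)) w

lemma transverseTrace_eq_mul (hll : ⟪l, l⟫ₘ = 0) (hmm : ⟪m, m⟫ₘ = 0) (hlm : ⟪l, m⟫ₘ = 1)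
    {v w v' w' : Fin n → ℝ} (k : ℝ)
    (h : ∀ f, IsTransverse l m f → ap C f v f w = k * ap C f v' f w') :
    transverseTrace C l m v w = k * transverseTrace C l m v' w' := by
  simp only [transverseTrace, mul_sum]
  refine sum_congr rfl fun a _ => ?_
  rw [h _ (isTransverse_transverseProj hll hmm hlm _)]
  ring

lemma transverseTrace_eq_zero (hll : ⟪l, l⟫ₘ = 0) (hmm : ⟪m, m⟫ₘ = 0) (hlm : ⟪l, m⟫ₘ = 1)
    {v w : Fin n → ℝ} (h : ∀ f, IsTransverse l m f → ap C f v f w = 0) :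
    transverseTrace C l m v w = 0 := by
  simpa using transverseTrace_eq_mul (v' := v) (w' := w) hll hmm hlm 0 fun f hf => by
    rw [h f hf, zero_mul]

lemma sum_eta_mul_ap_single (htr : ∀ b d, ∑ a, ∑ c, eta n a c * C a b c d = 0)
    (v w : Fin n → ℝ) : ∑ a, eta n a a * ap C (Pi.single a 1) v (Pi.single a 1) w = 0 := by
  have hdiag : ∀ b d, ∑ a, eta n a a * C a b a d = 0 := fun b d => by
    simpa [eta, diagonal_apply] using htr b d
  calc ∑ a, eta n a a * ap C (Pi.single a 1) v (Pi.single a 1) w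
      = ∑ a, ∑ b, ∑ d, eta n a a * C a b a d * v b * w d := by
        simp [ap, Pi.single_apply, mul_sum, mul_assoc]
    _ = ∑ b, ∑ d, (∑ a, eta n a a * C a b a d) * v b * w d := by
        rw [sum_rotate₃]; simp only [sum_mul]
    _ = 0 := by simp [hdiag]

lemma ap_trace_null_frame (hll : ⟪l, l⟫ₘ = 0) (hmm : ⟪m, m⟫ₘ = 0) (hlm : ⟪l, m⟫ₘ = 1)
    (htr : ∀ b d, ∑ a, ∑ c, eta n a c * C a b c d = 0) (v w : Fin n → ℝ) :
    ap C l v m w + ap C m v l w + transverseTrace C l m v w = 0 := by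
  let B : LinearMap.BilinForm ℝ (Fin n → ℝ) := LinearMap.mk₂ ℝ (fun x y => ap C x v y w)
    (fun _ _ _ => ap_add₁ ..) (fun _ _ _ => ap_smul₁ ..) (fun _ _ _ => ap_add₃ ..)
    (fun _ _ _ => ap_smul₃ ..)
  rw [← sum_eta_mul_ap_single htr v w]
  exact (sum_eta_mul_bilin_single hll hmm hlm B).symm

lemma theta_mulVec_of_null (hu : u = (√2)⁻¹ • (l - m)) (v : Fin n → ℝ) :
    theta u *ᵥ v = v + (⟪l, v⟫ₘ - ⟪m, v⟫ₘ) • (l - m) := by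
  have h2 : (2 : ℝ) * ((√2)⁻¹ * (√2)⁻¹) = 1 := by
    rw [← mul_inv, Real.mul_self_sqrt (by norm_num)]; norm_num
  rw [theta_mulVec, hu, smul_smul]
  congr 2
  simp only [smul_dotProduct, sub_dotProduct, smul_eq_mul]
  linear_combination (⟪l, v⟫ₘ - ⟪m, v⟫ₘ) * h2

lemma mink_self_of_null (hll : ⟪l, l⟫ₘ = 0) (hmm : ⟪m, m⟫ₘ = 0) (hlm : ⟪l, m⟫ₘ = 1)
    (hu : u = (√2)⁻¹ • (l - m)) : ⟪u, u⟫ₘ = -1 := by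
  have hml : ⟪m, l⟫ₘ = 1 := by rw [mink_comm, hlm]
  have h2 : (√2)⁻¹ * (√2)⁻¹ = (2 : ℝ)⁻¹ := by rw [← mul_inv, Real.mul_self_sqrt (by norm_num)]
  subst hu
  simp only [mulVec_smul, mulVec_sub, smul_dotProduct, dotProduct_smul, sub_dotProduct,
    dotProduct_sub, hll, hmm, hlm, hml, smul_eq_mul]
  linear_combination (-2) * h2

lemma mink_eq_zero_iff_of_null (hu : u = (√2)⁻¹ • (l - m)) (a : Fin n → ℝ) :
    ⟪u, a⟫ₘ = 0 ↔ ⟪l - m, a⟫ₘ = 0 := by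
  simp [hu, smul_dotProduct]

lemma theta_mulVec_l (hll : ⟪l, l⟫ₘ = 0) (hlm : ⟪l, m⟫ₘ = 1) (hu : u = (√2)⁻¹ • (l - m)) :
    theta u *ᵥ l = m := by
  rw [theta_mulVec_of_null hu, hll, mink_comm, hlm]; module

lemma theta_mulVec_m (hmm : ⟪m, m⟫ₘ = 0) (hlm : ⟪l, m⟫ₘ = 1) (hu : u = (√2)⁻¹ • (l - m)) :
    theta u *ᵥ m = l := by
  rw [theta_mulVec_of_null hu, hmm, hlm]; module

lemma theta_mulVec_of_isTransverse (hu : u = (√2)⁻¹ • (l - m)) {x : Fin n → ℝ}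
    (hx : IsTransverse l m x) : theta u *ᵥ x = x := by
  rw [theta_mulVec_of_null hu, hx.1, hx.2, sub_self, zero_smul, add_zero]

end NullFrame

namespace RiemannSymmetric

variable {n : ℕ} {l m u : Fin n → ℝ} {C : Fin n → Fin n → Fin n → Fin n → ℝ}

lemma ap_add_sub (hC : RiemannSymmetric C) (v w : Fin n → ℝ) :
    ap C (l + m) (l - m) v w = -2 * ap C l m v w := by
  simp only [ap_add₁, ap_sub₂, hC.ap_self₁₂]
  linarith [hC.ap_swap₁₂ l m v w]

lemma ap_sub_eq_zero_of_null_electric (hC : RiemannSymmetric C)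
    (hbianchi : ∀ a b c d, C a b c d + C a c d b + C a d b c = 0)
    (htr : ∀ b d, ∑ a, ∑ c, eta n a c * C a b c d = 0)
    (hll : ⟪l, l⟫ₘ = 0) (hmm : ⟪m, m⟫ₘ = 0) (hlm : ⟪l, m⟫ₘ = 1)
    (h₁ : ∀ x y, IsTransverse l m x → IsTransverse l m y → ap C l x l y = ap C m x m y)
    (h₂ : ∀ x y z, IsTransverse l m x → IsTransverse l m y → IsTransverse l m z →
      ap C l x y z = ap C m x y z)
    (h₃ : ∀ x y, IsTransverse l m x → IsTransverse l m y → ap C l m x y = 0)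
    {a b c : Fin n → ℝ} (ha : ⟪l - m, a⟫ₘ = 0) (hb : ⟪l - m, b⟫ₘ = 0) (hc : ⟪l - m, c⟫ₘ = 0) :
    ap C (l - m) a b c = 0 := by
  have cross : ∀ x y, IsTransverse l m x → IsTransverse l m y →
      ap C l x m y = ap C l y m x := fun x y hx hy => by
    linarith [ap_bianchi C l x m y hbianchi, h₃ y x hy hx, hC.ap_swap₃₄ l y m x]
  have lml : ∀ x, IsTransverse l m x → ap C l m l x + ap C l m m x = 0 := fun x hx => by
    have hτ : transverseTrace C l m l x = 1 * transverseTrace C l m m x :=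
      transverseTrace_eq_mul hll hmm hlm 1 fun f hf => by
        rw [hC.ap_swap_both l f x f, hC.ap_swap_both m f x f, h₂ f x f hf hx hf, one_mul]
    linarith [ap_trace_null_frame hll hmm hlm htr l x, ap_trace_null_frame hll hmm hlm htr m x,
      hC.ap_self₁₂ l m x, hC.ap_self₁₂ m l x, hC.ap_swap₁₂ l m l x]
  obtain ⟨c₁, x, hx, rfl⟩ := exists_smul_add_isTransverse hll hmm hlm ha
  obtain ⟨c₂, y, hy, rfl⟩ := exists_smul_add_isTransverse hll hmm hlm hb
  obtain ⟨c₃, z, hz, rfl⟩ := exists_smul_add_isTransverse hll hmm hlm hc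
  have hxyz : ap C (l - m) x y z = 0 := by rw [ap_sub₁, h₂ x y z hx hy hz, sub_self]
  have hst : ∀ y z, IsTransverse l m y → IsTransverse l m z →
      ap C (l + m) (l - m) y z = 0 := fun y z hy hz => by
    rw [hC.ap_add_sub, h₃ y z hy hz, mul_zero]
  have hsxt : ∀ x y, IsTransverse l m x → IsTransverse l m y →
      ap C (l + m) x (l - m) y = 0 := fun x y hx hy => by
    simp only [ap_add₁, ap_sub₃]
    linarith [h₁ x y hx hy, cross y x hy hx, hC.ap_swap_pairs l y m x]
  have hsts : ∀ x, IsTransverse l m x → ap C (l + m) (l - m) (l + m) x = 0 := fun x hx => by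
    rw [hC.ap_add_sub, ap_add₃, lml x hx, mul_zero]
  rw [show l - m = (0 : ℝ) • (l + m) + (l - m) by simp, hC.ap_smul_add, hxyz, hst y z hy hz,
    hsxt z x hz hx, hsxt y x hy hx, hsts z hz, hsts y hy]
  ring

lemma ap_cross_antisymm (hC : RiemannSymmetric C)
    (htr : ∀ b d, ∑ a, ∑ c, eta n a c * C a b c d = 0)
    (hll : ⟪l, l⟫ₘ = 0) (hmm : ⟪m, m⟫ₘ = 0) (hlm : ⟪l, m⟫ₘ = 1)
    (h₃ : ∀ x y z w, IsTransverse l m x → IsTransverse l m y → IsTransverse l m z →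
      IsTransverse l m w → ap C x y z w = 0)
    {x y : Fin n → ℝ} (hx : IsTransverse l m x) (hy : IsTransverse l m y) :
    ap C l x m y = -ap C l y m x := by
  have hτ : transverseTrace C l m x y = 0 :=
    transverseTrace_eq_zero hll hmm hlm fun f hf => h₃ f x f y hf hx hf hy
  linarith [ap_trace_null_frame hll hmm hlm htr x y, hC.ap_swap_pairs l y m x]

lemma ap_eq_zero_of_null_magnetic (hC : RiemannSymmetric C)
    (htr : ∀ b d, ∑ a, ∑ c, eta n a c * C a b c d = 0)
    (hll : ⟪l, l⟫ₘ = 0) (hmm : ⟪m, m⟫ₘ = 0) (hlm : ⟪l, m⟫ₘ = 1)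
    (h₁ : ∀ x y, IsTransverse l m x → IsTransverse l m y → ap C l x l y = -ap C m x m y)
    (h₂ : ∀ x y z, IsTransverse l m x → IsTransverse l m y → IsTransverse l m z →
      ap C l x y z = -ap C m x y z)
    (h₃ : ∀ x y z w, IsTransverse l m x → IsTransverse l m y → IsTransverse l m z →
      IsTransverse l m w → ap C x y z w = 0)
    {a b c d : Fin n → ℝ} (ha : ⟪l - m, a⟫ₘ = 0) (hb : ⟪l - m, b⟫ₘ = 0) (hc : ⟪l - m, c⟫ₘ = 0)
    (hd : ⟪l - m, d⟫ₘ = 0) :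
    ap C a b c d = 0 := by
  have hsxyz : ∀ x y z, IsTransverse l m x → IsTransverse l m y → IsTransverse l m z →
      ap C (l + m) x y z = 0 := fun x y z hx hy hz => by
    rw [ap_add₁, h₂ x y z hx hy hz, neg_add_cancel]
  have hsxsy : ∀ x y, IsTransverse l m x → IsTransverse l m y →
      ap C (l + m) x (l + m) y = 0 := fun x y hx hy => by
    simp only [ap_add₁, ap_add₃]
    linarith [h₁ x y hx hy, hC.ap_cross_antisymm htr hll hmm hlm h₃ hx hy,
      hC.ap_swap_pairs l y m x]
  obtain ⟨c₁, x, hx, rfl⟩ := exists_smul_add_isTransverse hll hmm hlm ha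
  obtain ⟨c₂, y, hy, rfl⟩ := exists_smul_add_isTransverse hll hmm hlm hb
  obtain ⟨c₃, z, hz, rfl⟩ := exists_smul_add_isTransverse hll hmm hlm hc
  obtain ⟨c₄, w, hw, rfl⟩ := exists_smul_add_isTransverse hll hmm hlm hd
  rw [hC.ap_smul_add, h₃ x y z w hx hy hz hw, hsxyz y z w hy hz hw, hsxyz x z w hx hz hw,
    hsxyz w x y hw hx hy, hsxyz z x y hz hx hy, hsxsy y w hy hw, hsxsy y z hy hz,
    hsxsy x w hx hw, hsxsy x z hx hz]
  ring

lemma ap_sub_sub_eq_zero_of_null_magnetic (hC : RiemannSymmetric C)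
    (htr : ∀ b d, ∑ a, ∑ c, eta n a c * C a b c d = 0)
    (hll : ⟪l, l⟫ₘ = 0) (hmm : ⟪m, m⟫ₘ = 0) (hlm : ⟪l, m⟫ₘ = 1)
    (h₁ : ∀ x y, IsTransverse l m x → IsTransverse l m y → ap C l x l y = -ap C m x m y)
    (h₂ : ∀ x y z, IsTransverse l m x → IsTransverse l m y → IsTransverse l m z →
      ap C l x y z = -ap C m x y z)
    (h₃ : ∀ x y z w, IsTransverse l m x → IsTransverse l m y → IsTransverse l m z →
      IsTransverse l m w → ap C x y z w = 0)
    {a b : Fin n → ℝ} (ha : ⟪l - m, a⟫ₘ = 0) (hb : ⟪l - m, b⟫ₘ = 0) :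
    ap C (l - m) a (l - m) b = 0 := by
  have cross : ∀ {x y}, IsTransverse l m x → IsTransverse l m y →
      ap C l x m y = -ap C l y m x := hC.ap_cross_antisymm htr hll hmm hlm h₃
  have lml : ∀ x, IsTransverse l m x → ap C l m l x = ap C l m m x := fun x hx => by
    have hτ : transverseTrace C l m l x = -1 * transverseTrace C l m m x :=
      transverseTrace_eq_mul hll hmm hlm (-1) fun f hf => by
        rw [hC.ap_swap_both l f x f, hC.ap_swap_both m f x f, h₂ f x f hf hx hf]; ring
    linarith [ap_trace_null_frame hll hmm hlm htr l x, ap_trace_null_frame hll hmm hlm htr m x,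
      hC.ap_self₁₂ l m x, hC.ap_self₁₂ m l x, hC.ap_swap₁₂ l m l x]
  have lmlm : ap C l m l m = 0 := by
    have hτ : transverseTrace C l m l m = 0 :=
      transverseTrace_eq_zero hll hmm hlm fun f hf => by
        rw [hC.ap_swap_both l f m f]; linarith [cross hf hf]
    linarith [ap_trace_null_frame hll hmm hlm htr l m, hC.ap_self₁₂ l m m, hC.ap_swap₁₂ l m l m]
  obtain ⟨c₁, x, hx, rfl⟩ := exists_smul_add_isTransverse hll hmm hlm ha
  obtain ⟨c₂, y, hy, rfl⟩ := exists_smul_add_isTransverse hll hmm hlm hb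
  have htxty : ap C (l - m) x (l - m) y = 0 := by
    simp only [ap_sub₁, ap_sub₃]
    linarith [h₁ x y hx hy, cross hx hy, hC.ap_swap_pairs l y m x]
  have hstt : ∀ x, IsTransverse l m x → ap C (l + m) (l - m) (l - m) x = 0 := fun x hx => by
    rw [hC.ap_add_sub, ap_sub₃, lml x hx, sub_self, mul_zero]
  have hstst : ap C (l + m) (l - m) (l + m) (l - m) = 0 := by
    rw [hC.ap_add_sub]
    simp only [ap_add₃, ap_sub₄, hC.ap_self₃₄]
    linarith [hC.ap_swap₃₄ l m l m, lmlm]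
  rw [show l - m = (0 : ℝ) • (l + m) + (l - m) by simp, hC.ap_smul_add, htxty, hstt y hy,
    hstt x hx, hstst]
  ring

theorem pull_theta_eq_self_iff_null (hC : RiemannSymmetric C)
    (hbianchi : ∀ a b c d, C a b c d + C a c d b + C a d b c = 0)
    (htr : ∀ b d, ∑ a, ∑ c, eta n a c * C a b c d = 0)
    (hll : ⟪l, l⟫ₘ = 0) (hmm : ⟪m, m⟫ₘ = 0) (hlm : ⟪l, m⟫ₘ = 1) (hu : u = (√2)⁻¹ • (l - m)) :
    pull (theta u) C = C ↔
      ∀ x y z : Fin n → ℝ, ⟪l, x⟫ₘ = 0 → ⟪m, x⟫ₘ = 0 → ⟪l, y⟫ₘ = 0 → ⟪m, y⟫ₘ = 0 →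
        ⟪l, z⟫ₘ = 0 → ⟪m, z⟫ₘ = 0 →
          ap C l x l y = ap C m x m y ∧ ap C l x y z = ap C m x y z ∧ ap C l m x y = 0 := by
  constructor
  · intro h x y z hx₁ hx₂ hy₁ hy₂ hz₁ hz₂
    have key : ∀ v₁ v₂ v₃ v₄, ap C (theta u *ᵥ v₁) (theta u *ᵥ v₂) (theta u *ᵥ v₃)
        (theta u *ᵥ v₄) = ap C v₁ v₂ v₃ v₄ := fun v₁ v₂ v₃ v₄ => by rw [← ap_pull, h]
    have θl := theta_mulVec_l hll hlm hu
    have θm := theta_mulVec_m hmm hlm hu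
    have θx := theta_mulVec_of_isTransverse hu ⟨hx₁, hx₂⟩
    have θy := theta_mulVec_of_isTransverse hu ⟨hy₁, hy₂⟩
    have θz := theta_mulVec_of_isTransverse hu ⟨hz₁, hz₂⟩
    refine ⟨by simpa only [θm, θx, θy] using key m x m y,
      by simpa only [θm, θx, θy, θz] using key m x y z, ?_⟩
    have hlm' := key m l x y
    rw [θm, θl, θx, θy] at hlm'
    linarith [hC.ap_swap₁₂ l m x y]
  · intro h
    refine hC.pull_theta_eq_self (mink_self_of_null hll hmm hlm hu) fun a b c ha hb hc => ?_
    rw [mink_eq_zero_iff_of_null hu] at ha hb hc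
    rw [hu, ap_smul₁, hC.ap_sub_eq_zero_of_null_electric hbianchi htr hll hmm hlm ?_ ?_ ?_ ha hb hc,
      mul_zero]
    · exact fun x y hx hy => (h x y y hx.1 hx.2 hy.1 hy.2 hy.1 hy.2).1
    · exact fun x y z hx hy hz => (h x y z hx.1 hx.2 hy.1 hy.2 hz.1 hz.2).2.1
    · exact fun x y hx hy => (h x y y hx.1 hx.2 hy.1 hy.2 hy.1 hy.2).2.2

theorem pull_theta_eq_neg_iff_null (hC : RiemannSymmetric C)
    (htr : ∀ b d, ∑ a, ∑ c, eta n a c * C a b c d = 0)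
    (hll : ⟪l, l⟫ₘ = 0) (hmm : ⟪m, m⟫ₘ = 0) (hlm : ⟪l, m⟫ₘ = 1) (hu : u = (√2)⁻¹ • (l - m)) :
    pull (theta u) C = (fun a b c d => -C a b c d) ↔
      ∀ x y z w : Fin n → ℝ, ⟪l, x⟫ₘ = 0 → ⟪m, x⟫ₘ = 0 → ⟪l, y⟫ₘ = 0 → ⟪m, y⟫ₘ = 0 →
        ⟪l, z⟫ₘ = 0 → ⟪m, z⟫ₘ = 0 → ⟪l, w⟫ₘ = 0 → ⟪m, w⟫ₘ = 0 →
          ap C l x l y = -ap C m x m y ∧ ap C l x y z = -ap C m x y z ∧ ap C x y z w = 0 := by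
  constructor
  · intro h x y z w hx₁ hx₂ hy₁ hy₂ hz₁ hz₂ hw₁ hw₂
    have key : ∀ v₁ v₂ v₃ v₄, ap C (theta u *ᵥ v₁) (theta u *ᵥ v₂) (theta u *ᵥ v₃)
        (theta u *ᵥ v₄) = -ap C v₁ v₂ v₃ v₄ := fun v₁ v₂ v₃ v₄ => by
      rw [← ap_pull, h, ap_neg_tensor]
    have θm := theta_mulVec_m hmm hlm hu
    have θx := theta_mulVec_of_isTransverse hu ⟨hx₁, hx₂⟩
    have θy := theta_mulVec_of_isTransverse hu ⟨hy₁, hy₂⟩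
    have θz := theta_mulVec_of_isTransverse hu ⟨hz₁, hz₂⟩
    have θw := theta_mulVec_of_isTransverse hu ⟨hw₁, hw₂⟩
    refine ⟨by simpa only [θm, θx, θy] using key m x m y,
      by simpa only [θm, θx, θy, θz] using key m x y z, ?_⟩
    have hxyzw := key x y z w
    rw [θx, θy, θz, θw] at hxyzw
    linarith
  · intro h
    have h₁ : ∀ x y, IsTransverse l m x → IsTransverse l m y → ap C l x l y = -ap C m x m y :=
      fun x y hx hy => (h x y y y hx.1 hx.2 hy.1 hy.2 hy.1 hy.2 hy.1 hy.2).1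
    have h₂ : ∀ x y z, IsTransverse l m x → IsTransverse l m y → IsTransverse l m z →
        ap C l x y z = -ap C m x y z := fun x y z hx hy hz =>
      (h x y z z hx.1 hx.2 hy.1 hy.2 hz.1 hz.2 hz.1 hz.2).2.1
    have h₃ : ∀ x y z w, IsTransverse l m x → IsTransverse l m y → IsTransverse l m z →
        IsTransverse l m w → ap C x y z w = 0 := fun x y z w hx hy hz hw =>
      (h x y z w hx.1 hx.2 hy.1 hy.2 hz.1 hz.2 hw.1 hw.2).2.2
    refine hC.pull_theta_eq_neg (mink_self_of_null hll hmm hlm hu) (fun a b c d ha hb hc hd => ?_)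
      fun a b ha hb => ?_
    · rw [mink_eq_zero_iff_of_null hu] at ha hb hc hd
      exact hC.ap_eq_zero_of_null_magnetic htr hll hmm hlm h₁ h₂ h₃ ha hb hc hd
    · rw [mink_eq_zero_iff_of_null hu] at ha hb
      rw [hu, ap_smul₁, ap_smul₃,
        hC.ap_sub_sub_eq_zero_of_null_magnetic htr hll hmm hlm h₁ h₂ h₃ ha hb, mul_zero, mul_zero]

end RiemannSymmetric

theorem stmt8_general {n : ℕ}
    (C : Fin n → Fin n → Fin n → Fin n → ℝ)
    (hanti1 : ∀ a b c d, C b a c d = -C a b c d)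
    (hanti2 : ∀ a b c d, C a b d c = -C a b c d)
    (hpair : ∀ a b c d, C c d a b = C a b c d)
    (hbianchi : ∀ a b c d, C a b c d + C a c d b + C a d b c = 0)
    (htracefree : ∀ b d, ∑ a, ∑ c, eta n a c * C a b c d = 0)
    (l m : Fin n → ℝ) (hl : IsNull l) (hm : IsNull m)
    (hlm : l ⬝ᵥ (eta n).mulVec m = 1)
    (u : Fin n → ℝ) (hu : u = (Real.sqrt 2)⁻¹ • (l - m)) :
    (pull (theta u) C = C ↔
      ∀ x y z : Fin n → ℝ,
        l ⬝ᵥ (eta n).mulVec x = 0 → m ⬝ᵥ (eta n).mulVec x = 0 →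
        l ⬝ᵥ (eta n).mulVec y = 0 → m ⬝ᵥ (eta n).mulVec y = 0 →
        l ⬝ᵥ (eta n).mulVec z = 0 → m ⬝ᵥ (eta n).mulVec z = 0 →
          ap C l x l y = ap C m x m y ∧
          ap C l x y z = ap C m x y z ∧
          ap C l m x y = 0) ∧
    (pull (theta u) C = (fun a b c d => -(C a b c d)) ↔
      ∀ x y z w : Fin n → ℝ,
        l ⬝ᵥ (eta n).mulVec x = 0 → m ⬝ᵥ (eta n).mulVec x = 0 →
        l ⬝ᵥ (eta n).mulVec y = 0 → m ⬝ᵥ (eta n).mulVec y = 0 →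
        l ⬝ᵥ (eta n).mulVec z = 0 → m ⬝ᵥ (eta n).mulVec z = 0 →
        l ⬝ᵥ (eta n).mulVec w = 0 → m ⬝ᵥ (eta n).mulVec w = 0 →
          ap C l x l y = -(ap C m x m y) ∧
          ap C l x y z = -(ap C m x y z) ∧
          ap C x y z w = 0) := by
  have hC : RiemannSymmetric C := ⟨hanti1, hanti2, hpair⟩
  exact ⟨hC.pull_theta_eq_self_iff_null hbianchi htracefree hl.2 hm.2 hlm hu,
    hC.pull_theta_eq_neg_iff_null htracefree hl.2 hm.2 hlm hu⟩

/-- Frame characterization of PE/PM Weyl tensors in a `u`-adapted null frame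
`u = (ℓ - m)/√2`. -/
theorem stmt8 {n : ℕ} (hn : 4 ≤ n)
    (C : Fin n → Fin n → Fin n → Fin n → ℝ)
    (hanti1 : ∀ a b c d, C b a c d = -C a b c d)
    (hanti2 : ∀ a b c d, C a b d c = -C a b c d)
    (hpair : ∀ a b c d, C c d a b = C a b c d)
    (hbianchi : ∀ a b c d, C a b c d + C a c d b + C a d b c = 0)
    (htracefree : ∀ b d, ∑ a, ∑ c, eta n a c * C a b c d = 0)
    (l m : Fin n → ℝ) (hl : IsNull l) (hm : IsNull m)
    (hlm : l ⬝ᵥ (eta n).mulVec m = 1)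
    (u : Fin n → ℝ) (hu : u = (Real.sqrt 2)⁻¹ • (l - m)) :
    (pull (theta u) C = C ↔
      ∀ x y z : Fin n → ℝ,
        l ⬝ᵥ (eta n).mulVec x = 0 → m ⬝ᵥ (eta n).mulVec x = 0 →
        l ⬝ᵥ (eta n).mulVec y = 0 → m ⬝ᵥ (eta n).mulVec y = 0 →
        l ⬝ᵥ (eta n).mulVec z = 0 → m ⬝ᵥ (eta n).mulVec z = 0 →
          ap C l x l y = ap C m x m y ∧
          ap C l x y z = ap C m x y z ∧
          ap C l m x y = 0) ∧
    (pull (theta u) C = (fun a b c d => -(C a b c d)) ↔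
      ∀ x y z w : Fin n → ℝ,
        l ⬝ᵥ (eta n).mulVec x = 0 → m ⬝ᵥ (eta n).mulVec x = 0 →
        l ⬝ᵥ (eta n).mulVec y = 0 → m ⬝ᵥ (eta n).mulVec y = 0 →
        l ⬝ᵥ (eta n).mulVec z = 0 → m ⬝ᵥ (eta n).mulVec z = 0 →
        l ⬝ᵥ (eta n).mulVec w = 0 → m ⬝ᵥ (eta n).mulVec w = 0 →
          ap C l x l y = -(ap C m x m y) ∧
          ap C l x y z = -(ap C m x y z) ∧
          ap C x y z w = 0) :=
  stmt8_general C hanti1 hanti2 hpair hbianchi htracefree l m hl hm hlm u hu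

end
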